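/- (Theorem, discrete measure, conjugate pair, constancy.) Under the stated discrete paraorthogonality setup with a conjugate pair of zeros, if W̃_j(t) = 0 for all t ∈ I and all j = 0,…,N, then φ_n′(t) = 0 for all t ∈ I; that is, the zero ζ(t) = e^{iφ_n(t)} does not move as t increases on I. -/

import Mathlib

/-!
Write `z_j = e^{iω_j}`, `ζ_k = e^{iφ_k}` and
`w_j = γ_j (cos ω_j - cos φ_n) ∏_{k ≤ n-2} |z_j - ζ_k|²`. On the circle
`(z - ζ_n)(z - conj ζ_n) conj z = 2 (cos ω - cos φ_n)`, so `2 w_j` is the `j`-th term of the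
paraorthogonality pairing of `P` with `z ∏_{k ≤ n-2} (z - ζ_k)`, and `∑_j w_j = 0` on `I`. Pairing
instead with `z ∏_{l ≠ k} (z - ζ_l)`, multiplying by `conj ζ_k` and taking imaginary parts gives
`∑_j w_j cot ((φ_k - ω_j) / 2) = 0`. The condition `W̃_j = 0` says `γ_j' = γ_j S̃_j ω_j'`, which
cancels every `ω_j'` from the logarithmic derivative of `w_j`. Differentiating `∑_j w_j = 0`
therefore leaves `sin φ_n · φ_n' · ∑_j γ_j ∏_k |z_j - ζ_k|² = 0`, and the last two factors are
positive.
-/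

open Polynomial
open Real Finset
open Complex (I normSq)
open scoped Complex ComplexConjugate

lemma exp_mul_I_eq (θ : ℝ) : cexp (θ * I) = cos θ + sin θ * I := by
  rw [Complex.exp_mul_I, ← Complex.ofReal_cos, ← Complex.ofReal_sin]

lemma conj_exp_mul_I (θ : ℝ) : conj (cexp (θ * I)) = cexp ((-θ : ℝ) * I) := by
  rw [← Complex.exp_conj, map_mul, Complex.conj_ofReal, Complex.conj_I, Complex.ofReal_neg,
    mul_neg, neg_mul]

lemma normSq_exp_mul_I_sub_exp_mul_I (θ ψ : ℝ) :
    normSq (cexp (θ * I) - cexp (ψ * I)) = 2 - 2 * cos (ψ - θ) := by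
  simp [exp_mul_I_eq, Complex.normSq_apply, Complex.cos_ofReal_re, Complex.sin_ofReal_re, cos_sub]
  nlinarith [sin_sq_add_cos_sq θ, sin_sq_add_cos_sq ψ]

lemma two_sub_two_cos_sub_pos {θ ψ : ℝ} (h : cexp (θ * I) ≠ cexp (ψ * I)) :
    0 < 2 - 2 * cos (ψ - θ) := by
  rw [← normSq_exp_mul_I_sub_exp_mul_I]
  exact Complex.normSq_pos.2 (sub_ne_zero.2 h)

lemma exp_mul_I_sub_conj_pair_mul_conj (θ ψ : ℝ) :
    (cexp (θ * I) - cexp (ψ * I)) * (cexp (θ * I) - cexp ((-ψ : ℝ) * I)) *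
      conj (cexp (θ * I)) = (2 * (cos θ - cos ψ) : ℝ) := by
  rw [conj_exp_mul_I, exp_mul_I_eq, exp_mul_I_eq, exp_mul_I_eq, exp_mul_I_eq]
  apply Complex.ext <;>
    simp only [Complex.mul_re, Complex.mul_im, Complex.sub_re, Complex.sub_im, Complex.add_re,
      Complex.add_im, Complex.ofReal_re, Complex.ofReal_im, Complex.I_re, Complex.I_im, cos_neg,
      sin_neg]
  · linear_combination (cos θ - 2 * cos ψ) * sin_sq_add_cos_sq θ + cos θ * sin_sq_add_cos_sq ψ
  · linear_combination sin θ * sin_sq_add_cos_sq θ - sin θ * sin_sq_add_cos_sq ψ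

lemma cos_ne_cos_of_exp_mul_I_ne {θ ψ : ℝ} (h₁ : cexp (θ * I) ≠ cexp (ψ * I))
    (h₂ : cexp (θ * I) ≠ cexp ((-ψ : ℝ) * I)) : cos θ ≠ cos ψ := by
  have hne : (cexp (θ * I) - cexp (ψ * I)) * (cexp (θ * I) - cexp ((-ψ : ℝ) * I)) *
      conj (cexp (θ * I)) ≠ 0 :=
    mul_ne_zero (mul_ne_zero (sub_ne_zero.2 h₁) (sub_ne_zero.2 h₂))
      (by simp [Complex.exp_ne_zero])
  rw [exp_mul_I_sub_conj_pair_mul_conj, Complex.ofReal_ne_zero] at hne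
  exact fun hc ↦ hne (by rw [hc, sub_self, mul_zero])

lemma im_conj_exp_mul_I_mul_sub (θ ψ : ℝ) :
    (conj (cexp (ψ * I)) * (cexp (θ * I) - cexp (ψ * I))).im = -sin (ψ - θ) := by
  rw [conj_exp_mul_I, exp_mul_I_eq, exp_mul_I_eq, exp_mul_I_eq]
  simp [Complex.cos_ofReal_re, Complex.sin_ofReal_re, sin_sub]
  ring

lemma two_sub_two_cos_mul_cot_half {x : ℝ} (hx : 0 < 2 - 2 * cos x) :
    (2 - 2 * cos x) * cot (x / 2) = 2 * sin x := by
  obtain ⟨y, rfl⟩ : ∃ y, x = 2 * y := ⟨x / 2, by ring⟩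
  rw [mul_div_cancel_left₀ _ two_ne_zero, cos_two_mul', sin_two_mul] at *
  have hsin : sin y ≠ 0 := by
    intro h
    rw [h] at hx
    nlinarith [sin_sq_add_cos_sq y]
  rw [cot_eq_cos_div_sin]
  field_simp
  linear_combination (-cos y) * sin_sq_add_cos_sq y

section

variable {ι : Type*}

-- Orthogonality of `p` to `z, …, z^{n-1}` in `L²(∑_{j ∈ J} γ_j δ_{e^{iω_j}})`.
def IsParaorthogonal (n : ℕ) (p : ℂ → ℂ) (J : Finset ι) (γ ω : ι → ℝ) : Prop :=
  ∀ g : ℂ[X], g.natDegree ≤ n - 1 → g.eval 0 = 0 →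
    ∑ j ∈ J, (γ j : ℂ) * p (cexp (ω j * I)) * conj (g.eval (cexp (ω j * I))) = 0

-- `∏_{k ∈ K} |e^{iθ} - e^{iφ_k}|²`, by `normSq_exp_mul_I_sub_exp_mul_I`.
noncomputable def chordProd (K : Finset ι) (φ : ι → ℝ) (θ : ℝ) : ℝ :=
  ∏ k ∈ K, (2 - 2 * cos (φ k - θ))

lemma chordProd_pos {K : Finset ι} {φ : ι → ℝ} {θ : ℝ}
    (h : ∀ k ∈ K, cexp (θ * I) ≠ cexp (φ k * I)) : 0 < chordProd K φ θ :=
  prod_pos fun k hk ↦ two_sub_two_cos_sub_pos (h k hk)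

lemma chordProd_mul_cot [DecidableEq ι] {K : Finset ι} {φ : ι → ℝ} {θ : ℝ} {k : ι}
    (hk : k ∈ K) (hpos : 0 < 2 - 2 * cos (φ k - θ)) :
    chordProd K φ θ * cot ((φ k - θ) / 2) = chordProd (K.erase k) φ θ * (2 * sin (φ k - θ)) := by
  rw [chordProd, chordProd, ← prod_erase_mul _ _ hk, mul_assoc, two_sub_two_cos_mul_cot_half hpos]

lemma hasDerivAt_chordProd [DecidableEq ι] {K : Finset ι} {φ : ι → ℝ → ℝ} {φ' : ι → ℝ}
    {ω : ℝ → ℝ} {ω' t : ℝ} (hφ : ∀ k ∈ K, HasDerivAt (φ k) (φ' k) t) (hω : HasDerivAt ω ω' t)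
    (hpos : ∀ k ∈ K, 0 < 2 - 2 * cos (φ k t - ω t)) :
    HasDerivAt (fun s ↦ chordProd K (φ · s) (ω s))
      (chordProd K (φ · t) (ω t) * ∑ k ∈ K, cot ((φ k t - ω t) / 2) * (φ' k - ω')) t := by
  have hfac : ∀ k ∈ K, HasDerivAt (fun s ↦ 2 - 2 * cos (φ k s - ω s))
      (-(2 * (-sin (φ k t - ω t) * (φ' k - ω')))) t := fun k hk ↦
    (((hφ k hk).sub hω).cos.const_mul 2).const_sub 2
  have hcot := fun k (hk : k ∈ K) ↦ chordProd_mul_cot (φ := (φ · t)) hk (hpos k hk)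
  unfold chordProd at hcot ⊢
  beta_reduce at hcot ⊢
  refine (HasDerivAt.fun_finsetProd hfac).congr_deriv ?_
  rw [mul_sum]
  refine sum_congr rfl fun k hk ↦ ?_
  rw [smul_eq_mul, ← mul_assoc _ (cot _), hcot k hk]
  ring

lemma hasDerivAt_weight [DecidableEq ι] {K : Finset ι} {γ ω ψ : ℝ → ℝ} {φ : ι → ℝ → ℝ}
    {γ' ω' ψ' t : ℝ} {φ' : ι → ℝ}
    (hγ : HasDerivAt γ γ' t) (hω : HasDerivAt ω ω' t) (hψ : HasDerivAt ψ ψ' t)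
    (hφ : ∀ k ∈ K, HasDerivAt (φ k) (φ' k) t)
    (hpos : ∀ k ∈ K, 0 < 2 - 2 * cos (φ k t - ω t)) (hpair : cos (ω t) ≠ cos (ψ t))
    (hW : 1 / (2 * (cos (ψ t) - cos (ω t))) * γ' -
      γ t * (1 / (2 * (cos (ψ t) - cos (ω t)))) *
        (sin (ω t) / (cos (ω t) - cos (ψ t)) + ∑ k ∈ K, cot ((φ k t - ω t) / 2)) * ω' = 0) :
    HasDerivAt (fun s ↦ γ s * (cos (ω s) - cos (ψ s)) * chordProd K (φ · s) (ω s))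
      (sin (ψ t) * ψ' * (γ t * chordProd K (φ · t) (ω t)) +
        ∑ k ∈ K, φ' k * (γ t * (cos (ω t) - cos (ψ t)) * chordProd K (φ · t) (ω t) *
          cot ((φ k t - ω t) / 2))) t := by
  have hsub : cos (ω t) - cos (ψ t) ≠ 0 := sub_ne_zero.2 hpair
  have hγ' : γ' = γ t * (sin (ω t) / (cos (ω t) - cos (ψ t)) +
      ∑ k ∈ K, cot ((φ k t - ω t) / 2)) * ω' := by
    have hs : 1 / (2 * (cos (ψ t) - cos (ω t))) ≠ 0 :=
      one_div_ne_zero (mul_ne_zero two_ne_zero (sub_ne_zero.2 hpair.symm))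
    refine sub_eq_zero.1 ((mul_eq_zero.1 ?_).resolve_left hs)
    linear_combination hW
  refine ((hγ.fun_mul (hω.cos.fun_sub hψ.cos)).fun_mul
    (hasDerivAt_chordProd hφ hω hpos)).congr_deriv ?_
  have hsplit : ∑ k ∈ K, cot ((φ k t - ω t) / 2) * (φ' k - ω') =
      ∑ k ∈ K, φ' k * cot ((φ k t - ω t) / 2) - (∑ k ∈ K, cot ((φ k t - ω t) / 2)) * ω' := by
    rw [sum_mul, ← sum_sub_distrib]
    exact sum_congr rfl fun _ _ ↦ by ring
  have hfactor : ∑ k ∈ K, φ' k * (γ t * (cos (ω t) - cos (ψ t)) * chordProd K (φ · t) (ω t) *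
      cot ((φ k t - ω t) / 2)) = γ t * (cos (ω t) - cos (ψ t)) * chordProd K (φ · t) (ω t) *
      ∑ k ∈ K, φ' k * cot ((φ k t - ω t) / 2) := by
    rw [mul_sum]
    exact sum_congr rfl fun _ _ ↦ by ring
  rw [hγ', hsplit, hfactor]
  field_simp
  ring

namespace IsParaorthogonal

variable {n : ℕ} {J : Finset ι} {γ ω : ι → ℝ} {φ : ℕ → ℝ}

lemma sum_mul_prod_eq_zero (hn : 2 ≤ n) (hconj : φ (n - 1) = -φ n)
    (hpara : IsParaorthogonal n (fun z ↦ ∏ k ∈ Icc 1 n, (z - cexp (φ k * I))) J γ ω)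
    {K : Finset ℕ} (hK : K ⊆ Icc 1 (n - 2)) :
    ∑ j ∈ J, ((γ j * (2 * (cos (ω j) - cos (φ n))) * chordProd K φ (ω j) : ℝ) : ℂ) *
      ∏ k ∈ Icc 1 (n - 2) \ K, (cexp (ω j * I) - cexp (φ k * I)) = 0 := by
  set g : ℂ[X] := X * ∏ k ∈ K, (X - C (cexp (φ k * I)))
  have hdeg : g.natDegree ≤ n - 1 := by
    have hcard := (card_le_card hK).trans_eq (Nat.card_Icc 1 (n - 2))
    rw [natDegree_mul X_ne_zero (prod_ne_zero_iff.2 fun k _ ↦ X_sub_C_ne_zero _), natDegree_X,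
      natDegree_prod _ _ fun k _ ↦ X_sub_C_ne_zero _]
    simp only [natDegree_X_sub_C, sum_const, smul_eq_mul, mul_one]
    omega
  have hIcc : Icc 1 n = insert n (insert (n - 1) (Icc 1 (n - 2))) := by
    ext k
    simp only [mem_Icc, mem_insert]
    omega
  refine Eq.trans (sum_congr rfl fun j _ ↦ ?_) (hpara g hdeg (by simp [g]))
  have hpair := exp_mul_I_sub_conj_pair_mul_conj (ω j) (φ n)
  have hchord : ∏ k ∈ K, (cexp (ω j * I) - cexp (φ k * I)) *
      conj (cexp (ω j * I) - cexp (φ k * I)) = chordProd K φ (ω j) := by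
    simp only [chordProd, Complex.ofReal_prod, Complex.mul_conj, normSq_exp_mul_I_sub_exp_mul_I]
  dsimp only
  rw [hIcc, prod_insert (by simp; omega), prod_insert (by simp; omega), hconj, ← prod_sdiff hK]
  simp only [g, eval_mul, eval_X, eval_prod, eval_sub, eval_C, map_mul, map_prod]
  rw [Complex.ofReal_mul, Complex.ofReal_mul, ← hchord, ← hpair, prod_mul_distrib]
  ring

lemma sum_weight_eq_zero (hn : 2 ≤ n) (hconj : φ (n - 1) = -φ n)
    (hpara : IsParaorthogonal n (fun z ↦ ∏ k ∈ Icc 1 n, (z - cexp (φ k * I))) J γ ω) :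
    ∑ j ∈ J, γ j * (cos (ω j) - cos (φ n)) * chordProd (Icc 1 (n - 2)) φ (ω j) = 0 := by
  have h := hpara.sum_mul_prod_eq_zero hn hconj subset_rfl
  simp only [sdiff_self, bot_eq_empty, prod_empty, mul_one] at h
  rw [← Complex.ofReal_sum, Complex.ofReal_eq_zero] at h
  have htwice : ∑ j ∈ J, γ j * (2 * (cos (ω j) - cos (φ n))) * chordProd (Icc 1 (n - 2)) φ (ω j) =
      2 * ∑ j ∈ J, γ j * (cos (ω j) - cos (φ n)) * chordProd (Icc 1 (n - 2)) φ (ω j) := by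
    rw [mul_sum]
    exact sum_congr rfl fun _ _ ↦ by ring
  linarith

lemma sum_weight_mul_cot_eq_zero (hn : 2 ≤ n) (hconj : φ (n - 1) = -φ n)
    (hpara : IsParaorthogonal n (fun z ↦ ∏ k ∈ Icc 1 n, (z - cexp (φ k * I))) J γ ω)
    (hsep : ∀ j ∈ J, ∀ k ∈ Icc 1 (n - 2), cexp (ω j * I) ≠ cexp (φ k * I))
    {k : ℕ} (hk : k ∈ Icc 1 (n - 2)) :
    ∑ j ∈ J, γ j * (cos (ω j) - cos (φ n)) * chordProd (Icc 1 (n - 2)) φ (ω j) *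
      cot ((φ k - ω j) / 2) = 0 := by
  have h := hpara.sum_mul_prod_eq_zero hn hconj (erase_subset k _)
  rw [sdiff_erase_self hk] at h
  have him := congrArg (fun w ↦ -(conj (cexp (φ k * I)) * w).im) h
  simp only [prod_singleton, mul_sum, Complex.im_sum, mul_left_comm _ (Complex.ofReal _),
    Complex.im_ofReal_mul, im_conj_exp_mul_I_mul_sub, mul_zero, Complex.zero_im, neg_zero,
    ← sum_neg_distrib] at him
  refine (sum_congr rfl fun j hj ↦ ?_).trans him
  rw [mul_assoc _ (chordProd _ _ _),
    chordProd_mul_cot hk (two_sub_two_cos_sub_pos (hsep j hj k hk))]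
  ring

end IsParaorthogonal

end

theorem discrete_popuc_conjugate_pair_zero_does_not_move_general
    -- the open interval `I = (a, b)`
    (a b : ℝ)
    -- the masses `γ_j` and mass points `ω_j`, `j = 0, …, N`
    (N : ℕ) (γ ω : ℕ → ℝ → ℝ)
    (hγpos : ∀ j ≤ N, ∀ t ∈ Set.Ioo a b, 0 < γ j t)
    (hγdiff : ∀ j ≤ N, ∀ t ∈ Set.Ioo a b, DifferentiableAt ℝ (γ j) t)
    (hωdiff : ∀ j ≤ N, ∀ t ∈ Set.Ioo a b, DifferentiableAt ℝ (ω j) t)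
    -- the zeros `e^{iφ_k(t)}`, `k = 1, …, n`, of the POPUC `P(·; t)`, with the
    -- conjugate pair `e^{±iφ_n(t)}`
    (n : ℕ) (hn : 2 ≤ n) (φ : ℕ → ℝ → ℝ)
    (hφdiff : ∀ k ∈ Finset.Icc 1 n, ∀ t ∈ Set.Ioo a b, DifferentiableAt ℝ (φ k) t)
    (hconj : ∀ t ∈ Set.Ioo a b, φ (n - 1) t = -φ n t)
    (hrange : ∀ t ∈ Set.Ioo a b, φ n t ∈ Set.Ioo 0 Real.pi)
    (P : ℂ → ℝ → ℂ)
    (hP : ∀ z t, P z t = ∏ k ∈ Finset.Icc 1 n, (z - Complex.exp (φ k t * Complex.I)))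
    (hsep : ∀ t ∈ Set.Ioo a b, ∀ j ≤ N, ∀ k ∈ Finset.Icc 1 n,
      Complex.exp (ω j t * Complex.I) ≠ Complex.exp (φ k t * Complex.I))
    -- paraorthogonality with respect to the measure `Σ_j γ_j(t) δ(θ − ω_j(t))`
    (hpara : ∀ t ∈ Set.Ioo a b, ∀ g : Polynomial ℂ,
      g.natDegree ≤ n - 1 → g.eval 0 = 0 →
      ∑ j ∈ Finset.range (N + 1), (γ j t : ℂ) *
        P (Complex.exp (ω j t * Complex.I)) t *
        (starRingEnd ℂ) (g.eval (Complex.exp (ω j t * Complex.I))) = 0)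
    -- the functions `s̃`, `S̃` and `W̃_j`
    (s' : ℝ → ℝ → ℝ)
    (hs' : ∀ θ t, s' θ t = 1 / (2 * (Real.cos (φ n t) - Real.cos θ)))
    (S' : ℝ → ℝ → ℝ)
    (hS' : ∀ θ t, S' θ t = Real.sin θ / (Real.cos θ - Real.cos (φ n t)) +
      ∑ k ∈ Finset.Icc 1 (n - 2), Real.cot ((φ k t - θ) / 2))
    (W' : ℕ → ℝ → ℝ)
    (hW' : ∀ j t, W' j t = s' (ω j t) t * deriv (γ j) t -
      γ j t * s' (ω j t) t * S' (ω j t) t * deriv (ω j) t)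
    -- hypothesis: all the `W̃_j` vanish identically on `I`
    (hWzero : ∀ t ∈ Set.Ioo a b, ∀ j ≤ N, W' j t = 0)
    -- conclusion
    : ∀ t ∈ Set.Ioo a b, deriv (φ n) t = 0 := by
  intro t ht
  set K := Icc 1 (n - 2)
  have hJ (j) (hj : j ∈ range (N + 1)) : j ≤ N := mem_range_succ_iff.1 hj
  have hKn (k) (hk : k ∈ K) : k ∈ Icc 1 n := by simp only [K, mem_Icc] at hk ⊢; omega
  have hpara' (s) (hs : s ∈ Set.Ioo a b) : IsParaorthogonal n
      (fun z ↦ ∏ k ∈ Icc 1 n, (z - cexp (φ k s * I))) (range (N + 1)) (γ · s) (ω · s) := by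
    simpa only [IsParaorthogonal, hP] using hpara s hs
  have hsep' (j) (hj : j ∈ range (N + 1)) (k) (hk : k ∈ Icc 1 n) :
      cexp (ω j t * I) ≠ cexp (φ k t * I) := hsep t ht j (hJ j hj) k hk
  have hsum (s) (hs : s ∈ Set.Ioo a b) : ∑ j ∈ range (N + 1),
      γ j s * (cos (ω j s) - cos (φ n s)) * chordProd K (φ · s) (ω j s) = 0 :=
    IsParaorthogonal.sum_weight_eq_zero (φ := (φ · s)) hn (hconj s hs) (hpara' s hs)
  have hcot (k) (hk : k ∈ K) := IsParaorthogonal.sum_weight_mul_cot_eq_zero (φ := (φ · t)) hn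
    (hconj t ht) (hpara' t ht) (fun j hj k hk ↦ hsep' j hj k (hKn k hk)) hk
  have hderiv := HasDerivAt.fun_sum (u := range (N + 1)) fun j hj ↦
    hasDerivAt_weight (K := K) (hγdiff j (hJ j hj) t ht).hasDerivAt
      (hωdiff j (hJ j hj) t ht).hasDerivAt (hφdiff n (by simp; omega) t ht).hasDerivAt
      (fun k hk ↦ (hφdiff k (hKn k hk) t ht).hasDerivAt)
      (fun k hk ↦ two_sub_two_cos_sub_pos (hsep' j hj k (hKn k hk)))
      (cos_ne_cos_of_exp_mul_I_ne (hsep' j hj n (by simp; omega))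
        (hconj t ht ▸ hsep' j hj (n - 1) (by simp; omega)))
      (by simpa only [hW', hs', hS'] using hWzero t ht j (hJ j hj))
  have hzero := hderiv.unique ((hasDerivAt_const t (0 : ℝ)).congr_of_eventuallyEq
    (Filter.eventually_of_mem (isOpen_Ioo.mem_nhds ht) hsum))
  rw [sum_add_distrib, ← mul_sum, sum_comm, sum_eq_zero (s := K) fun k hk ↦ by
    rw [← mul_sum, hcot k hk, mul_zero], add_zero] at hzero
  have hpos : 0 < ∑ j ∈ range (N + 1), γ j t * chordProd K (φ · t) (ω j t) :=
    sum_pos (fun j hj ↦ mul_pos (hγpos j (hJ j hj) t ht)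
      (chordProd_pos fun k hk ↦ hsep' j hj k (hKn k hk))) nonempty_range_add_one
  have hsin : 0 < sin (φ n t) := sin_pos_of_pos_of_lt_pi (hrange t ht).1 (hrange t ht).2
  exact (mul_eq_zero.1 ((mul_eq_zero.1 hzero).resolve_right hpos.ne')).resolve_left hsin.ne'

/-- Theorem (discrete measure, conjugate pair, constancy): under the discrete
paraorthogonality setup with a conjugate pair of zeros `e^{±iφ_n(t)}`, if
`W̃_j(t) = 0` for all `t ∈ I` and all `j`, then `φ_n'(t) = 0` for all `t ∈ I`,
i.e. the zero `ζ(t) = e^{iφ_n(t)}` does not move as `t` increases on `I`. -/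
theorem discrete_popuc_conjugate_pair_zero_does_not_move
    -- the open interval `I = (a, b)`
    (a b : ℝ) (hab : a < b)
    -- the masses `γ_j` and mass points `ω_j`, `j = 0, …, N`
    (N : ℕ) (γ ω : ℕ → ℝ → ℝ)
    (hγpos : ∀ j ≤ N, ∀ t ∈ Set.Ioo a b, 0 < γ j t)
    (hγdiff : ∀ j ≤ N, ∀ t ∈ Set.Ioo a b, DifferentiableAt ℝ (γ j) t)
    (hωdiff : ∀ j ≤ N, ∀ t ∈ Set.Ioo a b, DifferentiableAt ℝ (ω j) t)
    -- the zeros `e^{iφ_k(t)}`, `k = 1, …, n`, of the POPUC `P(·; t)`, with the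
    -- conjugate pair `e^{±iφ_n(t)}`
    (n : ℕ) (hn : 2 ≤ n) (φ : ℕ → ℝ → ℝ)
    (hφdiff : ∀ k ∈ Finset.Icc 1 n, ∀ t ∈ Set.Ioo a b, DifferentiableAt ℝ (φ k) t)
    (hconj : ∀ t ∈ Set.Ioo a b, φ (n - 1) t = -φ n t)
    (hrange : ∀ t ∈ Set.Ioo a b, φ n t ∈ Set.Ioo 0 Real.pi)
    (P : ℂ → ℝ → ℂ)
    (hP : ∀ z t, P z t = ∏ k ∈ Finset.Icc 1 n, (z - Complex.exp (φ k t * Complex.I)))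
    (hdistinct : ∀ t ∈ Set.Ioo a b, ∀ j ∈ Finset.Icc 1 n, ∀ k ∈ Finset.Icc 1 n, j ≠ k →
      Complex.exp (φ j t * Complex.I) ≠ Complex.exp (φ k t * Complex.I))
    (hsep : ∀ t ∈ Set.Ioo a b, ∀ j ≤ N, ∀ k ∈ Finset.Icc 1 n,
      Complex.exp (ω j t * Complex.I) ≠ Complex.exp (φ k t * Complex.I))
    -- paraorthogonality with respect to the measure `Σ_j γ_j(t) δ(θ − ω_j(t))`
    (hpara : ∀ t ∈ Set.Ioo a b, ∀ g : Polynomial ℂ,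
      g.natDegree ≤ n - 1 → g.eval 0 = 0 →
      ∑ j ∈ Finset.range (N + 1), (γ j t : ℂ) *
        P (Complex.exp (ω j t * Complex.I)) t *
        (starRingEnd ℂ) (g.eval (Complex.exp (ω j t * Complex.I))) = 0)
    -- the functions `s̃`, `S̃` and `W̃_j`
    (s' : ℝ → ℝ → ℝ)
    (hs' : ∀ θ t, s' θ t = 1 / (2 * (Real.cos (φ n t) - Real.cos θ)))
    (S' : ℝ → ℝ → ℝ)
    (hS' : ∀ θ t, S' θ t = Real.sin θ / (Real.cos θ - Real.cos (φ n t)) +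
      ∑ k ∈ Finset.Icc 1 (n - 2), Real.cot ((φ k t - θ) / 2))
    (W' : ℕ → ℝ → ℝ)
    (hW' : ∀ j t, W' j t = s' (ω j t) t * deriv (γ j) t -
      γ j t * s' (ω j t) t * S' (ω j t) t * deriv (ω j) t)
    -- hypothesis: all the `W̃_j` vanish identically on `I`
    (hWzero : ∀ t ∈ Set.Ioo a b, ∀ j ≤ N, W' j t = 0)
    -- conclusion
    : ∀ t ∈ Set.Ioo a b, deriv (φ n) t = 0 :=
  discrete_popuc_conjugate_pair_zero_does_not_move_general a b N γ ω hγpos hγdiff hωdiff n hn φ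
    hφdiff hconj hrange P hP hsep hpara s' hs' S' hS' W' hW' hWzero
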